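/- arXiv:1807.05879 — 2 statements merged into one kernel-verified Lean document; each statement's English description precedes it below -/
import Mathlib

section
/- Let ρ : G^ℂ → GL(V^ℂ) be a holomorphic representation of a complex Lie group, U ⊆ G^ℂ a closed real subgroup with Lie algebra 𝔲 a compact real form of 𝔤^ℂ, and W ⊆ V^ℂ a real form (fixed points of an antilinear involution τ) with ρ(U)(W) ⊆ W. Then for every x ∈ 𝔲 and every v ∈ V^ℂ, τ(ρ(exp(−ix))·v) = ρ(exp(ix))·τ(v); more generally ρ is balanced: there is a global Cartan involution Θ of G^ℂ (as a real group) with fixed set U such that ρ(Θ(g)) = τ ∘ ρ(g) ∘ τ for all g ∈ G^ℂ in the image of the exponential–polar decomposition G^ℂ = U·exp(i𝔲). -/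
/-!
A ℂ-linear operator preserving the real form `W = Fix τ` commutes with `τ`, because
`V = W ⊕ iW`. Conjugation `T ↦ τ T τ` is then a continuous ring endomorphism of the operator
algebra sending `c • A` to `c̄ • A`, so it commutes with the exponential series:
`τ exp(c A) τ = exp(c̄ A)`. Taking `c = ∓i` gives both identities.
-/

open NormedSpace Function ComplexConjugate Complex

theorem apply_comm_of_mapsTo_fixedPoints {V F : Type*} [AddCommGroup V] [Module ℂ V]
    [FunLike F V V] [LinearMapClass F ℂ V V] (σ : V →ₗ⋆[ℂ] V) (hσ : Involutive σ) {C : F}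
    (hC : Set.MapsTo C (fixedPoints σ) (fixedPoints σ)) (v : V) : σ (C v) = C (σ v) := by
  have hre : σ (C (v + σ v)) = C (v + σ v) := hC <| by
    simp [IsFixedPt, hσ v, add_comm]
  have him : σ (C (I • (v - σ v))) = C (I • (v - σ v)) := hC <| by
    simp [IsFixedPt, hσ v, smul_sub]
    abel
  simp only [map_add, map_sub, map_smulₛₗ, RingHom.id_apply, conj_I] at hre him
  linear_combination (norm := match_scalars <;> ring_nf <;> simp) (2⁻¹ : ℂ) • hre + (I / 2) • him

section FiniteDimensional

variable {V : Type*} [NormedAddCommGroup V] [NormedSpace ℂ V] [FiniteDimensional ℂ V]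

noncomputable def conjByAntilinearInvolution (σ : V →ₗ⋆[ℂ] V) (hσ : Involutive σ) :
    (V →L[ℂ] V) →ₐ[ℝ] (V →L[ℂ] V) where
  toFun T := LinearMap.toContinuousLinearMap (σ ∘ₛₗ (T : V →ₗ[ℂ] V) ∘ₛₗ σ)
  map_one' := by ext v; simp [hσ v]
  map_mul' S T := by ext v; simp [hσ _]
  map_zero' := by ext v; simp
  map_add' S T := by ext v; simp
  commutes' r := by ext v; simp [Algebra.algebraMap_eq_smul_one, ← Complex.coe_smul, hσ v]

@[simp]
theorem conjByAntilinearInvolution_apply (σ : V →ₗ⋆[ℂ] V) (hσ : Involutive σ) (T : V →L[ℂ] V)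
    (v : V) : conjByAntilinearInvolution σ hσ T v = σ (T (σ v)) := rfl

theorem conjByAntilinearInvolution_exp (σ : V →ₗ⋆[ℂ] V) (hσ : Involutive σ) (T : V →L[ℂ] V) :
    conjByAntilinearInvolution σ hσ (exp T) = exp (conjByAntilinearInvolution σ hσ T) :=
  map_exp_of_mem_ball (𝕂 := ℂ) (conjByAntilinearInvolution σ hσ)
    (conjByAntilinearInvolution σ hσ).toLinearMap.continuous_of_finiteDimensional T
    (by simp [expSeries_radius_eq_top])

theorem conjByAntilinearInvolution_smul_of_mapsTo_fixedPoints (σ : V →ₗ⋆[ℂ] V)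
    (hσ : Involutive σ) {A : V →L[ℂ] V} (hA : Set.MapsTo A (fixedPoints σ) (fixedPoints σ))
    (c : ℂ) : conjByAntilinearInvolution σ hσ (c • A) = conj c • A := by
  ext v
  simp [apply_comm_of_mapsTo_fixedPoints σ hσ hA, hσ v]

theorem apply_exp_smul_of_mapsTo_fixedPoints (σ : V →ₗ⋆[ℂ] V) (hσ : Involutive σ)
    {A : V →L[ℂ] V} (hA : Set.MapsTo A (fixedPoints σ) (fixedPoints σ)) (c : ℂ) (v : V) :
    σ (exp (c • A) v) = exp (conj c • A) (σ v) := by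
  rw [← conjByAntilinearInvolution_smul_of_mapsTo_fixedPoints σ hσ hA,
    ← conjByAntilinearInvolution_exp, conjByAntilinearInvolution_apply, hσ v]

end FiniteDimensional

/-- if a compact real form acts preserving a real form `W` (the fixed set of an
antilinear involution `τ`), then for `x ∈ 𝔲` (here `A = dρ(x)`, which preserves `W`) one has
`τ(ρ(exp(−ix))·v) = ρ(exp(ix))·τ(v)`, and more generally the representation is balanced on the
polar decomposition `U·exp(i𝔲)`: `ρ(Θ(u·exp(ix))) = τ ∘ ρ(u·exp(ix)) ∘ τ`
where `Θ(u·exp(ix)) = u·exp(−ix)` and `ρ(u) = B` preserves `W`. -/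
theorem balanced_of_compact_real_form_preserves_real_form
    {m : ℕ} (τ : EuclideanSpace ℂ (Fin m) →ₗ[ℝ] EuclideanSpace ℂ (Fin m))
    (hτinv : ∀ v, τ (τ v) = v)
    (hτanti : ∀ (c : ℂ) (v : EuclideanSpace ℂ (Fin m)),
      τ (c • v) = (starRingEnd ℂ) c • τ v)
    (A : EuclideanSpace ℂ (Fin m) →L[ℂ] EuclideanSpace ℂ (Fin m))
    (hA : ∀ v, τ v = v → τ (A v) = A v)
    (B : (EuclideanSpace ℂ (Fin m) →L[ℂ] EuclideanSpace ℂ (Fin m))ˣ)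
    (hB : ∀ v, τ v = v → τ (B.val v) = B.val v) :
    (∀ v, τ (exp ((-Complex.I) • A) v) = exp (Complex.I • A) (τ v)) ∧
    (∀ v, τ ((B.val ∘L exp (Complex.I • A)) v) =
      (B.val ∘L exp ((-Complex.I) • A)) (τ v)) := by
  let σ : EuclideanSpace ℂ (Fin m) →ₗ⋆[ℂ] EuclideanSpace ℂ (Fin m) :=
    { toFun := τ, map_add' := map_add τ, map_smul' := hτanti }
  have hexp : ∀ (c : ℂ) v, τ (exp (c • A) v) = exp (conj c • A) (τ v) :=
    apply_exp_smul_of_mapsTo_fixedPoints σ hτinv hA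
  have hτB : ∀ v, τ (B.val v) = B.val (τ v) := apply_comm_of_mapsTo_fixedPoints σ hτinv hB
  refine ⟨fun v => by simpa only [conj_neg_I] using hexp (-I) v, fun v => ?_⟩
  simp only [ContinuousLinearMap.comp_apply, hτB, hexp, conj_I]
end

section
/- Let 𝔤 = 𝔬(n,ℂ) with the adjoint action of O(n,ℂ) restricted to the compact real form, and let f ∈ 𝔬(n,ℂ) decompose as f = f₊ + f₋, where f₊ ∈ 𝔬(n) and f₋ ∈ i𝔬(n). If [f₊, f₋] = 0, then f is a minimal vector for the adjoint action with respect to the norm induced by −tr(X Ȳᵀ): explicitly, ‖Ad(g)(f)‖ ≥ ‖f‖ for all g ∈ O(n,ℂ). -/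
/-!
The commuting condition makes `f` normal, and normal matrices minimize the Frobenius norm on
their whole similarity orbit. For invertible `g` put `P = gᴴ g = U diag(μ) Uᴴ` with `μ > 0`; then
`‖g f g⁻¹‖² = tr (f P⁻¹ fᴴ P) = ∑ᵢⱼ (μᵢ / μⱼ) |Fᵢⱼ|²` with `F = Uᴴ f U` normal, so the rows and
columns of `F` have equal norms. Since `μᵢ / μⱼ ≥ 1 + log μᵢ - log μⱼ` and the logarithmic terms
cancel against these balanced weights, the sum is at least `∑ᵢⱼ |Fᵢⱼ|² = ‖f‖²`.
-/
open Matrix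
open scoped ComplexOrder

theorem sum_le_sum_div_mul_of_balanced {ι : Type*} [Fintype ι] (μ : ι → ℝ) (c : ι → ι → ℝ)
    (hμ : ∀ i, 0 < μ i) (hc : ∀ i j, 0 ≤ c i j) (hbal : ∀ i, ∑ j, c i j = ∑ j, c j i) :
    ∑ i, ∑ j, c i j ≤ ∑ i, ∑ j, μ i / μ j * c i j := by
  have hlog : ∑ i, ∑ j, (Real.log (μ i) - Real.log (μ j)) * c i j = 0 := by
    simp only [sub_mul, Finset.sum_sub_distrib, ← Finset.mul_sum, hbal]
    rw [Finset.sum_comm (f := fun i j => Real.log (μ j) * c i j)]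
    simp only [← Finset.mul_sum, sub_self]
  have hterm : ∀ i j, 1 + (Real.log (μ i) - Real.log (μ j)) ≤ μ i / μ j := by
    intro i j
    have := Real.log_le_sub_one_of_pos (div_pos (hμ i) (hμ j))
    rw [Real.log_div (hμ i).ne' (hμ j).ne'] at this
    linarith
  calc ∑ i, ∑ j, c i j
      = ∑ i, ∑ j, (1 + (Real.log (μ i) - Real.log (μ j))) * c i j := by
        simp only [add_mul, one_mul, Finset.sum_add_distrib, hlog, add_zero]
    _ ≤ ∑ i, ∑ j, μ i / μ j * c i j := by
        gcongr with i _ j _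
        exacts [hc i j, hterm i j]

theorem isStarNormal_add_of_star_eq_neg {R : Type*} [Ring R] [StarRing R] {a b : R}
    (ha : star a = -a) (hb : IsSelfAdjoint b) (hab : Commute a b) : IsStarNormal (a + b) := by
  rw [isStarNormal_iff, star_add, ha, hb.star_eq]
  exact ((Commute.refl a).neg_left.add_right hab.neg_left).add_left
    (hab.symm.add_right (Commute.refl b))

namespace Matrix

theorem conjTranspose_eq_transpose_of_im_eq_zero {m n : Type*} {A : Matrix m n ℂ}
    (h : ∀ i j, (A i j).im = 0) : Aᴴ = Aᵀ := by
  ext i j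
  exact Complex.conj_eq_iff_im.mpr (h j i)

variable {n : Type*} [Fintype n]

theorem re_trace_mul_conjTranspose (A : Matrix n n ℂ) :
    (trace (A * Aᴴ)).re = ∑ i, ∑ j, Complex.normSq (A i j) := by
  simp only [trace, diag, mul_apply, conjTranspose_apply, RCLike.star_def, Complex.mul_conj,
    Complex.re_sum, Complex.ofReal_re]

theorem sum_normSq_row_eq_sum_normSq_col {A : Matrix n n ℂ} (hA : IsStarNormal A) (i : n) :
    ∑ j, Complex.normSq (A i j) = ∑ j, Complex.normSq (A j i) := by
  have h := congrArg (fun M : Matrix n n ℂ => (M i i).re) hA.star_comm_self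
  simp only [star_eq_conjTranspose, mul_apply, conjTranspose_apply, RCLike.star_def,
    Complex.re_sum] at h
  simpa only [Complex.mul_conj, Complex.conj_mul', Complex.ofReal_re, mul_comm] using h.symm

theorem re_trace_mul_diagonal_mul_conjTranspose_mul_diagonal [DecidableEq n] (F : Matrix n n ℂ)
    (μ : n → ℝ) :
    (trace (F * diagonal (fun i => (μ i : ℂ)⁻¹) * Fᴴ * diagonal (fun i => (μ i : ℂ)))).re =
      ∑ i, ∑ j, μ i / μ j * Complex.normSq (F i j) := by
  rw [Matrix.mul_assoc _ Fᴴ]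
  simp only [trace, diag, mul_apply (N := Fᴴ * _)]
  simp only [mul_diagonal, conjTranspose_apply, RCLike.star_def, Complex.re_sum]
  refine Finset.sum_congr rfl fun i _ => Finset.sum_congr rfl fun j _ => ?_
  rw [mul_mul_mul_comm, Complex.mul_conj, mul_comm]
  norm_cast
  ring

theorem trace_conjStarAlgAut [DecidableEq n] (U : unitaryGroup n ℂ) (X : Matrix n n ℂ) :
    trace (Unitary.conjStarAlgAut ℂ _ U X) = trace X := by
  rw [Unitary.conjStarAlgAut_apply, trace_mul_cycle, Unitary.coe_star_mul_self, Matrix.one_mul]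

theorem IsStarNormal.re_trace_mul_conjTranspose_le_of_posDef [DecidableEq n] {f P : Matrix n n ℂ}
    (hf : IsStarNormal f) (hP : P.PosDef) :
    (trace (f * fᴴ)).re ≤ (trace (f * P⁻¹ * fᴴ * P)).re := by
  set μ := hP.1.eigenvalues
  set φ := Unitary.conjStarAlgAut ℂ _ hP.1.eigenvectorUnitary
  set F := φ.symm f
  have hfF : f = φ F := (φ.apply_symm_apply f).symm
  have hP_eq : P = φ (diagonal fun i => (μ i : ℂ)) := hP.1.spectral_theorem
  have hPinv_eq : P⁻¹ = φ (diagonal fun i => (μ i : ℂ)⁻¹) := by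
    refine inv_eq_left_inv ?_
    rw [hP_eq, ← map_mul, diagonal_mul_diagonal, ← map_one φ, ← diagonal_one]
    congr 2
    funext i
    exact inv_mul_cancel₀ (Complex.ofReal_ne_zero.mpr (hP.eigenvalues_pos i).ne')
  have hF : IsStarNormal F := hf.map φ.symm
  rw [hPinv_eq, hP_eq, hfF, ← star_eq_conjTranspose, ← map_star, star_eq_conjTranspose,
    ← map_mul, ← map_mul, ← map_mul, ← map_mul, trace_conjStarAlgAut, trace_conjStarAlgAut,
    re_trace_mul_conjTranspose, re_trace_mul_diagonal_mul_conjTranspose_mul_diagonal]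
  exact sum_le_sum_div_mul_of_balanced μ _ hP.eigenvalues_pos (fun i j => Complex.normSq_nonneg _)
    (sum_normSq_row_eq_sum_normSq_col hF)

theorem IsStarNormal.re_trace_mul_conjTranspose_le_conj [DecidableEq n] {f g : Matrix n n ℂ}
    (hf : IsStarNormal f) (hg : IsUnit g) :
    (trace (f * fᴴ)).re ≤ (trace (g * f * g⁻¹ * (g * f * g⁻¹)ᴴ)).re := by
  have hP : (gᴴ * g).PosDef := PosDef.conjTranspose_mul_self g (mulVec_injective_iff_isUnit.mpr hg)
  have htrace : trace (g * f * g⁻¹ * (g * f * g⁻¹)ᴴ) = trace (f * (gᴴ * g)⁻¹ * fᴴ * (gᴴ * g)) := by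
    rw [mul_inv_rev, ← conjTranspose_nonsing_inv, conjTranspose_mul, conjTranspose_mul]
    simp only [Matrix.mul_assoc]
    rw [trace_mul_comm]
    simp only [Matrix.mul_assoc]
  rw [htrace]
  exact hf.re_trace_mul_conjTranspose_le_of_posDef hP

end Matrix

/-- let `f = f₊ + f₋ ∈ 𝔬(n,ℂ)` with `f₊ ∈ 𝔬(n)` (real antisymmetric) and
`f₋ ∈ i𝔬(n)`. If `[f₊, f₋] = 0` then `f` is a minimal vector for the adjoint action of
`O(n,ℂ)` w.r.t. the norm with `‖X‖² = Re tr(X·X̄ᵀ)`: `‖Ad(g)(f)‖ ≥ ‖f‖` for all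
`g ∈ O(n,ℂ)`. -/
theorem commuting_parts_give_minimal_vector
    {n : ℕ} (fp fm f : Matrix (Fin n) (Fin n) ℂ)
    -- `f₊ ∈ 𝔬(n)`: real antisymmetric
    (hfp : (∀ i j, (fp i j).im = 0) ∧ fpᵀ = -fp)
    -- `f₋ ∈ i𝔬(n)`: `i` times a real antisymmetric matrix
    (hfm : ∃ y : Matrix (Fin n) (Fin n) ℂ, (∀ i j, (y i j).im = 0) ∧ yᵀ = -y ∧
      fm = Complex.I • y)
    (hf : f = fp + fm)
    -- `[f₊, f₋] = 0`
    (hcomm : fp * fm = fm * fp) :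
    ∀ g : Matrix (Fin n) (Fin n) ℂ, gᵀ * g = 1 →
      (Matrix.trace (f * (f.map (starRingEnd ℂ))ᵀ)).re ≤
        (Matrix.trace ((g * f * g⁻¹) * ((g * f * g⁻¹).map (starRingEnd ℂ))ᵀ)).re := by
  intro g hg
  obtain ⟨y, hy_real, hy_antisymm, rfl⟩ := hfm
  have hfp_skew : star fp = -fp := by
    rw [star_eq_conjTranspose, conjTranspose_eq_transpose_of_im_eq_zero hfp.1, hfp.2]
  have hfm_selfAdjoint : IsSelfAdjoint (Complex.I • y) := by
    rw [IsSelfAdjoint, star_smul, star_eq_conjTranspose,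
      conjTranspose_eq_transpose_of_im_eq_zero hy_real, hy_antisymm, Complex.star_def,
      Complex.conj_I, neg_smul, smul_neg, neg_neg]
  have hf_normal : IsStarNormal f :=
    hf ▸ isStarNormal_add_of_star_eq_neg hfp_skew hfm_selfAdjoint hcomm
  have hg_unit : IsUnit g := (isUnit_iff_isUnit_det g).mpr (isUnit_det_of_left_inverse hg)
  exact hf_normal.re_trace_mul_conjTranspose_le_conj hg_unit
end
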